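/- arXiv:nlin/0601001 — 10 statements merged into one kernel-verified Lean document; each statement's English description precedes it below -/
import Mathlib

section
/- If A is a weakly nonassociative algebra (i.e. (a, bc, d) = 0 for all a,b,c,d ∈ A), then A' = {b : (a,b,c)=0 ∀a,c} is a two-sided ideal of A. -/
/-- The middle nucleus A' = {b | (a,b,c) = 0 ∀ a,c}. -/
def nucleus (A : Type*) [NonUnitalNonAssocRing A] : Set A :=
  {b | ∀ a c : A, a * b * c = a * (b * c)}

/-- If `A` is weakly nonassociative, i.e. `(a, bc, d) = 0` for all `a,b,c,d`, then
`A'` is a two-sided ideal of `A`. -/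
theorem nucleus_is_two_sided_ideal {R A : Type*} [CommRing R]
    [NonUnitalNonAssocRing A] [Module R A] [SMulCommClass R A A] [IsScalarTower R A A]
    (hW : ∀ a b c d : A, a * (b * c) * d = a * (b * c * d)) :
    (∀ b b' : A, b ∈ nucleus A → b' ∈ nucleus A → b + b' ∈ nucleus A) ∧
    (∀ b : A, b ∈ nucleus A → -b ∈ nucleus A) ∧
    (∀ (r : R) (b : A), b ∈ nucleus A → r • b ∈ nucleus A) ∧
    (∀ a b : A, b ∈ nucleus A → a * b ∈ nucleus A ∧ b * a ∈ nucleus A) := by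
  refine ⟨fun b b' hb hb' u v => ?_, fun b hb u v => ?_, fun r b hb u v => ?_,
    fun a b hb => ⟨fun u v => hW u a b v, fun u v => hW u b a v⟩⟩
  · simp only [mul_add, add_mul, hb u v, hb' u v]
  · simp only [mul_neg, neg_mul, hb u v]
  · simp only [smul_mul_assoc, mul_smul_comm, hb u v]
end

section
/- In a WNA algebra A, for any f ∈ A and all m,n ≥ 0, one has L_f^n R_f^{m+1} = R_f^m L_f^n R_f and R_f^n L_f^{m+1} = L_f^m R_f^n L_f as operators on A, where L_f, R_f denote left and right multiplication by f. -/
/-- Left multiplication by `f`. -/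
def lmul {A : Type*} [NonUnitalNonAssocRing A] (f : A) : A → A := fun x => f * x

/-- Right multiplication by `f`. -/
def rmul {A : Type*} [NonUnitalNonAssocRing A] (f : A) : A → A := fun x => x * f

private lemma lr_comm {A : Type*} [NonUnitalNonAssocRing A]
    (hW : ∀ a b c d : A, a * (b * c) * d = a * (b * c * d)) (f b c : A) :
    lmul f (rmul f (b * c)) = rmul f (lmul f (b * c)) := by
  simp only [lmul, rmul]
  exact (hW f b c f).symm

/-- L commutes with R^[m] on products. -/
private lemma l_rm {A : Type*} [NonUnitalNonAssocRing A]
    (hW : ∀ a b c d : A, a * (b * c) * d = a * (b * c * d)) (f : A) :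
    ∀ (m : ℕ) (b c : A),
      lmul f ((rmul f)^[m] (b * c)) = (rmul f)^[m] (lmul f (b * c)) := by
  intro m
  induction m with
  | zero => intro b c; rfl
  | succ m ih =>
    intro b c
    rw [Function.iterate_succ_apply, Function.iterate_succ_apply]
    have : rmul f (b * c) = (b * c) * f := rfl
    rw [this, ih (b * c) f, ← lr_comm hW f b c]
    rfl

/-- R commutes with L^[m] on products. -/
private lemma r_lm {A : Type*} [NonUnitalNonAssocRing A]
    (hW : ∀ a b c d : A, a * (b * c) * d = a * (b * c * d)) (f : A) :
    ∀ (m : ℕ) (b c : A),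
      rmul f ((lmul f)^[m] (b * c)) = (lmul f)^[m] (rmul f (b * c)) := by
  intro m
  induction m with
  | zero => intro b c; rfl
  | succ m ih =>
    intro b c
    rw [Function.iterate_succ_apply, Function.iterate_succ_apply]
    have : lmul f (b * c) = f * (b * c) := rfl
    rw [this, ih f (b * c), lr_comm hW f b c]
    rfl

private lemma ln_rm {A : Type*} [NonUnitalNonAssocRing A]
    (hW : ∀ a b c d : A, a * (b * c) * d = a * (b * c * d)) (f : A) :
    ∀ (n m : ℕ) (b c : A),
      (lmul f)^[n] ((rmul f)^[m] (b * c)) = (rmul f)^[m] ((lmul f)^[n] (b * c)) := by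
  intro n
  induction n with
  | zero => intro m b c; rfl
  | succ n ih =>
    intro m b c
    rw [Function.iterate_succ_apply, Function.iterate_succ_apply, l_rm hW f m b c]
    have : lmul f (b * c) = f * (b * c) := rfl
    rw [this, ih m f (b * c)]

private lemma rn_lm {A : Type*} [NonUnitalNonAssocRing A]
    (hW : ∀ a b c d : A, a * (b * c) * d = a * (b * c * d)) (f : A) :
    ∀ (n m : ℕ) (b c : A),
      (rmul f)^[n] ((lmul f)^[m] (b * c)) = (lmul f)^[m] ((rmul f)^[n] (b * c)) := by
  intro n
  induction n with
  | zero => intro m b c; rfl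
  | succ n ih =>
    intro m b c
    rw [Function.iterate_succ_apply, Function.iterate_succ_apply, r_lm hW f m b c]
    have : rmul f (b * c) = (b * c) * f := rfl
    rw [this, ih m (b * c) f]

/-- In a WNA algebra, `L_f^n R_f^{m+1} = R_f^m L_f^n R_f` and
`R_f^n L_f^{m+1} = L_f^m R_f^n L_f` as operators on `A`. -/
theorem lmul_rmul_iterate_relations {A : Type*} [NonUnitalNonAssocRing A]
    (hW : ∀ a b c d : A, a * (b * c) * d = a * (b * c * d)) (f : A) :
    ∀ (m n : ℕ) (a : A),
      (lmul f)^[n] ((rmul f)^[m+1] a) = (rmul f)^[m] ((lmul f)^[n] (rmul f a)) ∧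
      (rmul f)^[n] ((lmul f)^[m+1] a) = (lmul f)^[m] ((rmul f)^[n] (lmul f a)) := by
  intro m n a
  constructor
  · rw [Function.iterate_succ_apply]
    have : rmul f a = a * f := rfl
    rw [this, ln_rm hW f n m a f]
  · rw [Function.iterate_succ_apply]
    have : lmul f a = f * a := rfl
    rw [this, rn_lm hW f n m f a]
end

section
/- Let A be a WNA algebra with f ∈ A and derived products a ∘₁ b := ab, a ∘_{n+1} b := a(f ∘ₙ b) − (af) ∘ₙ b. Then for all m,n ≥ 1, all a,c ∈ A and all b ∈ A', (a ∘ₙ b) ∘ₘ c = a ∘ₙ (b ∘ₘ c). -/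
/-- Derived products: `circ f (n-1) a b` is `a ∘ₙ b`. -/
def circ {A : Type*} [NonUnitalNonAssocRing A] (f : A) : ℕ → A → A → A
  | 0, a, b => a * b
  | n+1, a, b => a * circ f n f b - circ f n (a * f) b

lemma nucleus_sub {A : Type*} [NonUnitalNonAssocRing A] {x y : A}
    (hx : x ∈ nucleus A) (hy : y ∈ nucleus A) : x - y ∈ nucleus A := by
  intro a c
  simp only [mul_sub, sub_mul, hx a c, hy a c]

lemma circ_mem_nucleus {A : Type*} [NonUnitalNonAssocRing A]
    (hW : ∀ a b c d : A, a * (b * c) * d = a * (b * c * d)) (f : A) :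
    ∀ (n : ℕ) (x y : A), circ f n x y ∈ nucleus A
  | 0, x, y => fun a c => hW a x y c
  | n+1, x, y =>
      nucleus_sub (fun a c => hW a x (circ f n f y) c)
        (circ_mem_nucleus hW f n (x * f) y)

lemma circ_sub {A : Type*} [NonUnitalNonAssocRing A] (f : A) :
    ∀ (n : ℕ) (a x y : A), circ f n a (x - y) = circ f n a x - circ f n a y
  | 0, a, x, y => mul_sub a x y
  | n+1, a, x, y => by
      show a * circ f n f (x - y) - circ f n (a * f) (x - y) = _
      rw [circ_sub f n f x y, circ_sub f n (a * f) x y, mul_sub]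
      show _ = a * circ f n f x - circ f n (a*f) x - (a * circ f n f y - circ f n (a*f) y)
      abel

lemma circ_mul {A : Type*} [NonUnitalNonAssocRing A]
    (hW : ∀ a b c d : A, a * (b * c) * d = a * (b * c * d)) (f : A) {b : A}
    (hb : b ∈ nucleus A) :
    ∀ (n : ℕ) (a c : A), circ f n a b * c = circ f n a (b * c)
  | 0, a, c => hb a c
  | n+1, a, c => by
      show (a * circ f n f b - circ f n (a * f) b) * c = _
      rw [sub_mul, circ_mem_nucleus hW f n f b a c, circ_mul hW f hb n f c,
        circ_mul hW f hb n (a * f) c]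
      rfl

/-- In a WNA algebra, for all `m,n ≥ 1`, all `a,c` and all `b ∈ A'`:
`(a ∘ₙ b) ∘ₘ c = a ∘ₙ (b ∘ₘ c)`. -/
theorem circ_assoc_of_mem_nucleus {A : Type*} [NonUnitalNonAssocRing A]
    (hW : ∀ a b c d : A, a * (b * c) * d = a * (b * c * d)) (f : A) :
    ∀ (m n : ℕ) (a c b : A), b ∈ nucleus A →
      circ f m (circ f n a b) c = circ f n a (circ f m b c) := by
  intro m
  induction m with
  | zero => exact fun n a c b hb => circ_mul hW f hb n a c
  | succ m ih =>
      intro n a c b hb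
      show circ f n a b * circ f m f c - circ f m (circ f n a b * f) c = _
      rw [circ_mul hW f hb n a (circ f m f c), circ_mul hW f hb n a f,
        ih n a c (b * f) (fun p q => hW p b f q)]
      show _ = circ f n a (b * circ f m f c - circ f m (b * f) c)
      rw [circ_sub]
end

section
/- Let A be a WNA algebra with f ∈ A and products ∘ₙ defined by a ∘₁ b = ab, a ∘_{n+1} b = a(f ∘ₙ b) − (af) ∘ₙ b. Then for all n ≥ 1 and a,b ∈ A: a ∘_{n+1} b = a ∘ₙ (fb) − (a ∘ₙ f)·b. -/
lemma circ_mid_assoc {A : Type*} [NonUnitalNonAssocRing A]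
    (hW : ∀ a b c d : A, a * (b * c) * d = a * (b * c * d)) (f : A) :
    ∀ (n : ℕ) (a b c d : A), a * (circ f n b c * d) = a * circ f n b c * d := by
  intro n
  induction n with
  | zero => intro a b c d; simp only [circ]; exact (hW a b c d).symm
  | succ n ih =>
    intro a b c d
    simp only [circ, sub_mul, mul_sub]
    rw [ih, hW a b (circ f n f c) d]

/-- In a WNA algebra, for all `n ≥ 1`: `a ∘_{n+1} b = a ∘ₙ (fb) − (a ∘ₙ f)·b`. -/
theorem circ_succ_alt {A : Type*} [NonUnitalNonAssocRing A]
    (hW : ∀ a b c d : A, a * (b * c) * d = a * (b * c * d)) (f : A) :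
    ∀ (n : ℕ) (a b : A),
      circ f (n+1) a b = circ f n a (f * b) - circ f n a f * b := by
  intro n
  induction n with
  | zero => intro a b; simp only [circ]
  | succ n ih =>
    intro a b
    show a * circ f (n+1) f b - circ f (n+1) (a*f) b = _
    rw [ih f b, ih (a*f) b, mul_sub]
    show _ = (a * circ f n f (f*b) - circ f n (a*f) (f*b))
        - (a * circ f n f f - circ f n (a*f) f) * b
    rw [sub_mul, circ_mid_assoc hW f n a f f b]
    abel
end

section
/- Let A be a WNA algebra with f ∈ A and products ∘ₙ as above. Then for all m,n ≥ 1 and a,b ∈ A: a ∘ₘ (f ∘ₙ b) − (a ∘ₘ f) ∘ₙ b = a ∘_{m+n} b. -/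
lemma circ_sub_left {A : Type*} [NonUnitalNonAssocRing A] (f : A) :
    ∀ (n : ℕ) (x y b : A), circ f n (x - y) b = circ f n x b - circ f n y b
  | 0, x, y, b => by simp [circ, sub_mul]
  | n+1, x, y, b => by
    simp only [circ, sub_mul, circ_sub_left f n]
    abel

lemma circ_mul_prod {A : Type*} [NonUnitalNonAssocRing A]
    (hW : ∀ a b c d : A, a * (b * c) * d = a * (b * c * d)) (f : A) :
    ∀ (n : ℕ) (a u v b : A), circ f n (a * (u * v)) b = a * circ f n (u * v) b
  | 0, a, u, v, b => by simpa [circ] using hW a u v b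
  | n+1, a, u, v, b => by
    simp only [circ]
    rw [hW a u v f, hW a u v (circ f n f b),
      circ_mul_prod hW f n a (u * v) f b, mul_sub]

lemma circ_mul_circ {A : Type*} [NonUnitalNonAssocRing A]
    (hW : ∀ a b c d : A, a * (b * c) * d = a * (b * c * d)) (f : A) :
    ∀ (m n : ℕ) (a u v b : A),
      circ f n (a * circ f m u v) b = a * circ f n (circ f m u v) b
  | 0, n, a, u, v, b => circ_mul_prod hW f n a u v b
  | m+1, n, a, u, v, b => by
    show circ f n (a * (u * circ f m f v - circ f m (u * f) v)) b
        = a * circ f n (u * circ f m f v - circ f m (u * f) v) b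
    rw [mul_sub, circ_sub_left, circ_sub_left,
      circ_mul_prod hW f n a u (circ f m f v) b,
      circ_mul_circ hW f m n a (u * f) v b, mul_sub]

/-- In a WNA algebra, for all `m,n ≥ 1`:
`a ∘ₘ (f ∘ₙ b) − (a ∘ₘ f) ∘ₙ b = a ∘_{m+n} b`.
(Here `circ f m` is `∘_{m+1}`, so `∘_{(m+1)+(n+1)}` is `circ f (m+n+1)`.) -/
theorem circ_add_identity {A : Type*} [NonUnitalNonAssocRing A]
    (hW : ∀ a b c d : A, a * (b * c) * d = a * (b * c * d)) (f : A) :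
    ∀ (m n : ℕ) (a b : A),
      circ f m a (circ f n f b) - circ f n (circ f m a f) b
        = circ f (m + n + 1) a b := by
  intro m
  induction m with
  | zero =>
    intro n a b
    rw [Nat.zero_add]
    rfl
  | succ m ih =>
    intro n a b
    have h1 := ih n f b
    have h2 := ih n (a * f) b
    rw [Nat.add_right_comm m 1 n]
    show a * circ f m f (circ f n f b) - circ f m (a * f) (circ f n f b)
        - circ f n (a * circ f m f f - circ f m (a * f) f) b
        = a * circ f (m + n + 1) f b - circ f (m + n + 1) (a * f) b
    rw [circ_sub_left, circ_mul_circ hW f m n a f f b, ← h1, ← h2, mul_sub]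
    abel
end

section
/- Let A be a WNA algebra. The products ∘ₙ (defined recursively via a fixed element f) depend only on the equivalence class of f in A/A': replacing f by f + b with b ∈ A' gives the same products ∘ₙ for all n. -/
lemma circ_add_left {A : Type*} [NonUnitalNonAssocRing A] (f : A) :
    ∀ (n : ℕ) (x y c : A), circ f n (x + y) c = circ f n x c + circ f n y c := by
  intro n
  induction n with
  | zero => intro x y c; simp [circ, add_mul]
  | succ n ih =>
      intro x y c
      simp only [circ, add_mul, ih]
      abel

lemma circ_nuc {A : Type*} [NonUnitalNonAssocRing A]
    (hW : ∀ a b c d : A, a * (b * c) * d = a * (b * c * d)) (f : A) :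
    ∀ (n : ℕ) (x : A), (∀ a c : A, a * x * c = a * (x * c)) →
      ∀ a c : A, a * circ f n x c = circ f n (a * x) c := by
  intro n
  induction n with
  | zero => intro x hx a c; exact (hx a c).symm
  | succ n ih =>
      intro x hx a c
      simp only [circ, mul_sub]
      rw [← hx a (circ f n f c),
        ih (x * f) (fun a c => hW a x f c) a c, ← hx a f]

/-- In a WNA algebra, the products `∘ₙ` depend only on the class of `f` modulo `A'`:
replacing `f` by `f + b` with `b ∈ A'` gives the same products. -/
theorem circ_depends_only_on_class {A : Type*} [NonUnitalNonAssocRing A]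
    (hW : ∀ a b c d : A, a * (b * c) * d = a * (b * c * d)) (f : A) :
    ∀ b ∈ nucleus A, ∀ (n : ℕ) (a c : A),
      circ (f + b) n a c = circ f n a c := by
  intro b hb n
  induction n with
  | zero => intro a c; rfl
  | succ n ih =>
      intro a c
      simp only [circ, ih, mul_add, circ_add_left, circ_nuc hW f n b hb a c]
      abel
end

section
/- In a WNA algebra A with f ∈ A, setting pₖ := f ∘ₖ f, hₖ := L_f^k(f), eₖ := R_f^k(f), the identities pₙ = hₙ − Σ_{k=1}^{n−1} pₖ h_{n−k−1} and pₙ = (−1)^{n+1} eₙ − Σ_{k=1}^{n−1} (−1)^{n−k} e_{n−k−1} pₖ hold for all n ≥ 1. -/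
/-- `hₖ = L_f^k(f)`. -/
def hpow {A : Type*} [NonUnitalNonAssocRing A] (f : A) (k : ℕ) : A :=
  (fun x => f * x)^[k] f

/-- `eₖ = R_f^k(f)`. -/
def epow {A : Type*} [NonUnitalNonAssocRing A] (f : A) (k : ℕ) : A :=
  (fun x => x * f)^[k] f

/-- `pₖ = f ∘ₖ f` (for `k ≥ 1`). -/
def pprod {A : Type*} [NonUnitalNonAssocRing A] (f : A) (k : ℕ) : A :=
  circ f (k - 1) f f

section aux

variable {A : Type*} [NonUnitalNonAssocRing A]

/-- An element that associates in the middle. -/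
def IsMid (c : A) : Prop := ∀ x d : A, x * c * d = x * (c * d)

lemma isMid_sub {a b : A} (ha : IsMid a) (hb : IsMid b) : IsMid (a - b) := by
  intro x d
  rw [mul_sub, sub_mul, sub_mul, mul_sub, ha x d, hb x d]

lemma isMid_circ (hW : ∀ a b c d : A, a * (b * c) * d = a * (b * c * d)) (f : A) :
    ∀ (n : ℕ) (a b : A), IsMid (circ f n a b)
  | 0, a, b => fun x d => hW x a b d
  | n+1, a, b => by
    have h1 : IsMid (a * circ f n f b) := fun x d => hW x a (circ f n f b) d
    exact isMid_sub h1 (isMid_circ hW f n (a * f) b)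

lemma circ_alt (hW : ∀ a b c d : A, a * (b * c) * d = a * (b * c * d)) (f : A) :
    ∀ (n : ℕ) (a b : A), circ f (n+1) a b = circ f n a (f * b) - circ f n a f * b := by
  intro n
  induction n with
  | zero => intro a b; simp [circ]
  | succ n ih =>
    intro a b
    have hm := isMid_circ hW f n f f a b
    show a * circ f (n+1) f b - circ f (n+1) (a*f) b = _
    rw [ih f b, ih (a*f) b, circ, circ, mul_sub, sub_mul, ← hm]
    abel

lemma hpow_succ (f : A) (m : ℕ) : hpow f (m+1) = f * hpow f m :=
  Function.iterate_succ_apply' _ _ _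

lemma epow_succ (f : A) (m : ℕ) : epow f (m+1) = epow f m * f :=
  Function.iterate_succ_apply' _ _ _

lemma Qlem (hW : ∀ a b c d : A, a * (b * c) * d = a * (b * c * d)) (f : A) :
    ∀ (n m : ℕ), circ f n f (hpow f m)
      = hpow f (n+m+1)
        - ∑ j ∈ Finset.range n, circ f j f f * hpow f (n - j - 1 + m) := by
  intro n
  induction n with
  | zero => intro m; simp [circ, ← hpow_succ]
  | succ n ih =>
    intro m
    rw [circ_alt hW, ← hpow_succ, ih (m+1), Finset.sum_range_succ]
    have h0 : n + (m+1) + 1 = n + 1 + m + 1 := by omega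
    have h1 : n + 1 - n - 1 + m = m := by omega
    have h2 : ∑ j ∈ Finset.range n, circ f j f f * hpow f (n - j - 1 + (m+1))
        = ∑ j ∈ Finset.range n, circ f j f f * hpow f (n + 1 - j - 1 + m) := by
      refine Finset.sum_congr rfl fun j hj => ?_
      have hj' : j < n := Finset.mem_range.mp hj
      have : n - j - 1 + (m+1) = n + 1 - j - 1 + m := by omega
      rw [this]
    rw [h0, h1, h2]
    abel

lemma Slem (f : A) :
    ∀ (n m : ℕ), circ f n (epow f m) f
      = ((-1 : ℤ)^n) • epow f (n+m+1)
        + ∑ j ∈ Finset.range n, ((-1 : ℤ)^(n-1-j)) • (epow f (n-1-j+m) * circ f j f f) := by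
  intro n
  induction n with
  | zero => intro m; simp [circ, ← epow_succ]
  | succ n ih =>
    intro m
    rw [circ, ← epow_succ, ih (m+1), Finset.sum_range_succ]
    have h0 : n + (m+1) + 1 = n + 1 + m + 1 := by omega
    have h1 : n + 1 - 1 - n = 0 := by omega
    have h3 : ((-1 : ℤ)^(n+1)) = -((-1 : ℤ)^n) := by ring
    have h4 : ∑ j ∈ Finset.range n, ((-1 : ℤ)^(n+1-1-j)) • (epow f (n+1-1-j+m) * circ f j f f)
        = ∑ j ∈ Finset.range n, -(((-1 : ℤ)^(n-1-j)) • (epow f (n-1-j+(m+1)) * circ f j f f)) := by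
      refine Finset.sum_congr rfl fun j hj => ?_
      have hj' : j < n := Finset.mem_range.mp hj
      have e1 : n + 1 - 1 - j = (n - 1 - j) + 1 := by omega
      have e2 : n + 1 - 1 - j + m = n - 1 - j + (m + 1) := by omega
      rw [e2, e1, pow_succ, mul_comm, neg_one_mul, neg_smul]
    rw [h0, h4, h3, Finset.sum_neg_distrib, neg_smul, h1, pow_zero, one_smul, zero_add]
    abel

lemma sum_Ioo_zero {M : Type*} [AddCommMonoid M] (F : ℕ → M) (N : ℕ) :
    ∑ k ∈ Finset.Ioo 0 (N+1), F k = ∑ j ∈ Finset.range N, F (j+1) := by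
  have h : Finset.Ioo 0 (N+1) = (Finset.range N).image (· + 1) := by
    ext x
    simp only [Finset.mem_Ioo, Finset.mem_image, Finset.mem_range]
    constructor
    · rintro ⟨h1, h2⟩; exact ⟨x - 1, by omega, by omega⟩
    · rintro ⟨a, ha, rfl⟩; omega
  rw [h, Finset.sum_image (fun a _ b _ hab => by omega)]

end aux

/-- In a WNA algebra, for all `n ≥ 1`:
`pₙ = hₙ − Σ_{k=1}^{n−1} pₖ h_{n−k−1}` and
`pₙ = (−1)^{n+1} eₙ − Σ_{k=1}^{n−1} (−1)^{n−k} e_{n−k−1} pₖ`. -/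
theorem p_in_terms_of_h_and_e {A : Type*} [NonUnitalNonAssocRing A]
    (hW : ∀ a b c d : A, a * (b * c) * d = a * (b * c * d)) (f : A) :
    ∀ n : ℕ, 1 ≤ n →
      (pprod f n = hpow f n - ∑ k ∈ Finset.Ioo 0 n, pprod f k * hpow f (n - k - 1)) ∧
      (pprod f n = ((-1 : ℤ)^(n+1)) • epow f n
        - ∑ k ∈ Finset.Ioo 0 n, ((-1 : ℤ)^(n - k)) • (epow f (n - k - 1) * pprod f k)) := by
  intro n hn
  obtain ⟨N, rfl⟩ : ∃ N, n = N + 1 := ⟨n - 1, by omega⟩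
  have hp : ∀ k : ℕ, pprod f (k+1) = circ f k f f := by
    intro k; simp [pprod]
  constructor
  · rw [hp N, sum_Ioo_zero]
    have hsum : ∑ j ∈ Finset.range N, pprod f (j+1) * hpow f (N+1-(j+1)-1)
        = ∑ j ∈ Finset.range N, circ f j f f * hpow f (N - j - 1 + 0) := by
      refine Finset.sum_congr rfl fun j hj => ?_
      have hj' : j < N := Finset.mem_range.mp hj
      rw [hp j]
      have : N + 1 - (j+1) - 1 = N - j - 1 + 0 := by omega
      rw [this]
    rw [hsum]
    have h00 : hpow f (N+1) = hpow f (N + 0 + 1) := rfl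
    rw [h00, ← Qlem hW f N 0]
    rfl
  · rw [hp N, sum_Ioo_zero]
    have e1 : ((-1 : ℤ)^(N+1+1)) = (-1 : ℤ)^N := by ring
    rw [e1]
    have h4 : ∑ j ∈ Finset.range N, ((-1 : ℤ)^(N+1-(j+1))) • (epow f (N+1-(j+1)-1) * pprod f (j+1))
        = ∑ j ∈ Finset.range N, -(((-1 : ℤ)^(N-1-j)) • (epow f (N-1-j+0) * circ f j f f)) := by
      refine Finset.sum_congr rfl fun j hj => ?_
      have hj' : j < N := Finset.mem_range.mp hj
      rw [hp j]
      have e2 : N + 1 - (j+1) = (N - 1 - j) + 1 := by omega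
      have e3 : N + 1 - (j+1) - 1 = N - 1 - j + 0 := by omega
      rw [e3, e2, pow_succ, mul_comm, neg_one_mul, neg_smul]
    rw [h4, Finset.sum_neg_distrib, sub_neg_eq_add]
    have h5 : epow f (N+1) = epow f (N + 0 + 1) := rfl
    rw [h5, ← Slem f N 0]
    rfl
end

section
/- Let A(f) be a δ-compatible WNA algebra with derivations δₙ satisfying δₙ(f) = f ∘ₙ f. Then for all n ≥ 1: n·hₙ = Σ_{k=1}^n δₖ(h_{n−k}) and n·eₙ = Σ_{k=1}^n (−1)^{k+1} δₖ(e_{n−k}), where hₖ = L_f^k(f) and eₖ = R_f^k(f). -/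
section Aux

variable {A : Type*} [NonUnitalNonAssocRing A]

/-- Iterated left multiplication. -/
def Lp (f : A) (m : ℕ) (b : A) : A := (fun x => f * x)^[m] b

/-- Iterated right multiplication. -/
def Rp (f : A) (m : ℕ) (a : A) : A := (fun x => x * f)^[m] a

lemma circ_zero (f a b : A) : circ f 0 a b = a * b := rfl

lemma circ_succ (f : A) (m : ℕ) (a b : A) :
    circ f (m+1) a b = a * circ f m f b - circ f m (a * f) b := rfl

lemma Lp_succ (f : A) (m : ℕ) (b : A) : Lp f (m+1) b = f * Lp f m b :=
  Function.iterate_succ_apply' _ _ _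

lemma Rp_succ' (f : A) (m : ℕ) (a : A) : Rp f (m+1) a = Rp f m (a * f) :=
  Function.iterate_succ_apply _ _ _

lemma Rp_zero (f a : A) : Rp f 0 a = a := rfl

lemma hpow_eq_Lp (f : A) (m : ℕ) : hpow f m = Lp f m f := rfl

lemma epow_eq_Rp (f : A) (m : ℕ) : epow f m = Rp f m f := rfl

/-- The WNA property extends to all values of `circ` in the middle slot. -/
lemma circ_middle (hW : ∀ a b c d : A, a * (b * c) * d = a * (b * c * d)) (f : A) :
    ∀ (m : ℕ) (u v a d : A),
      a * circ f m u v * d = a * (circ f m u v * d) := by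
  intro m
  induction m with
  | zero =>
    intro u v a d
    exact hW a u v d
  | succ m ih =>
    intro u v a d
    rw [circ_succ, mul_sub, sub_mul, sub_mul, mul_sub, hW a u (circ f m f v) d,
      ih (u * f) v a d]

/-- Left expansion of `circ` (uses WNA). -/
lemma circ_left (hW : ∀ a b c d : A, a * (b * c) * d = a * (b * c * d)) (f b : A) :
    ∀ (m : ℕ) (a : A), circ f m a b =
      a * Lp f m b - ∑ j ∈ Finset.range m, circ f j a f * Lp f (m - 1 - j) b := by
  intro m
  induction m with
  | zero =>
    intro a
    simp [circ_zero, Lp]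
  | succ m ih =>
    intro a
    rw [circ_succ, ih f, ih (a * f), Finset.sum_range_succ', Lp_succ]
    have key : ∀ j ∈ Finset.range m,
        circ f (j+1) a f * Lp f (m + 1 - 1 - (j+1)) b
          = a * (circ f j f f * Lp f (m - 1 - j) b)
            - circ f j (a * f) f * Lp f (m - 1 - j) b := by
      intro j hj
      have hj' : j < m := Finset.mem_range.mp hj
      have h2 : m + 1 - 1 - (j+1) = m - 1 - j := by omega
      rw [h2, circ_succ, sub_mul, circ_middle hW f j f f a (Lp f (m - 1 - j) b)]
    rw [Finset.sum_congr rfl key, Finset.sum_sub_distrib, ← Finset.mul_sum]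
    simp only [circ_zero, Nat.add_sub_cancel, Nat.sub_zero]
    rw [mul_sub]
    abel

/-- Right expansion of `circ` (purely from the definition). -/
lemma circ_right (f : A) :
    ∀ (m : ℕ) (a : A), circ f m a f =
      (∑ j ∈ Finset.range m, (-1 : ℤ)^(m - 1 - j) • (Rp f (m - 1 - j) a * circ f j f f))
        + (-1 : ℤ)^m • (Rp f m a * f) := by
  intro m
  induction m with
  | zero =>
    intro a
    simp [circ_zero, Rp]
  | succ m ih =>
    intro a
    rw [circ_succ, ih (a * f), Finset.sum_range_succ]
    have key : ∀ j ∈ Finset.range m,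
        (-1 : ℤ)^(m + 1 - 1 - j) • (Rp f (m + 1 - 1 - j) a * circ f j f f)
          = -((-1 : ℤ)^(m - 1 - j) • (Rp f (m - 1 - j) (a * f) * circ f j f f)) := by
      intro j hj
      have hj' : j < m := Finset.mem_range.mp hj
      have h2 : m + 1 - 1 - j = (m - 1 - j) + 1 := by omega
      rw [h2, pow_succ, Rp_succ', mul_neg_one, neg_smul]
    rw [Finset.sum_congr rfl key, Finset.sum_neg_distrib]
    have h3 : m + 1 - 1 - m = 0 := by omega
    rw [h3, pow_zero, one_smul, Rp_zero]
    have h4 : (-1 : ℤ)^(m+1) • (Rp f (m+1) a * f)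
        = -((-1 : ℤ)^m • (Rp f m (a * f) * f)) := by
      rw [pow_succ, Rp_succ', mul_neg_one, neg_smul]
    rw [h4]
    abel

/-- The key identity for the `h`'s: `h_{n+1} = p_{n+1} + ∑_{k=1}^n p_k h_{n-k}`. -/
lemma h_id (hW : ∀ a b c d : A, a * (b * c) * d = a * (b * c * d)) (f : A) (n : ℕ) :
    hpow f (n+1) = pprod f (n+1)
      + ∑ k ∈ Finset.Icc 1 n, pprod f k * hpow f (n - k) := by
  have e1 : pprod f (n+1) = circ f n f f := rfl
  rw [e1, circ_left hW f f n f, ← Finset.Ico_add_one_right_eq_Icc, Finset.sum_Ico_eq_sum_range]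
  have e2 : n + 1 - 1 = n := by omega
  rw [e2]
  have e3 : ∀ i ∈ Finset.range n,
      pprod f (1 + i) * hpow f (n - (1 + i)) = circ f i f f * Lp f (n - 1 - i) f := by
    intro i hi
    have h1 : 1 + i = i + 1 := by omega
    have h2 : n - (1 + i) = n - 1 - i := by omega
    rw [h2, h1]
    rfl
  rw [Finset.sum_congr rfl e3]
  have e4 : f * Lp f n f = hpow f (n+1) := (hpow_succ f n).symm
  rw [e4]
  abel

/-- The key identity for the `e`'s:
`e_{n+1} = (-1)^n p_{n+1} + ∑_{k=1}^n (-1)^{k+1} e_{n-k} p_k`. -/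
lemma e_id (f : A) (n : ℕ) :
    epow f (n+1) = ((-1 : ℤ)^n) • pprod f (n+1)
      + ∑ k ∈ Finset.Icc 1 n, ((-1 : ℤ)^(k+1)) • (epow f (n - k) * pprod f k) := by
  have h := circ_right f n f
  have hE : Rp f n f * f = epow f (n+1) := (epow_succ f n).symm
  rw [hE] at h
  have hsq : ∀ x : A, ((-1 : ℤ)^n) • (((-1 : ℤ)^n) • x) = x := by
    intro x
    rw [smul_smul, ← pow_add,
      show ((-1 : ℤ))^(n+n) = 1 from Even.neg_one_pow ⟨n, rfl⟩, one_smul]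
  have key : epow f (n+1) = ((-1 : ℤ)^n) • circ f n f f
      - ((-1 : ℤ)^n) •
        ∑ j ∈ Finset.range n, (-1 : ℤ)^(n - 1 - j) • (Rp f (n - 1 - j) f * circ f j f f) := by
    have h' : ((-1 : ℤ)^n) • epow f (n+1) = circ f n f f
        - ∑ j ∈ Finset.range n, (-1 : ℤ)^(n - 1 - j) • (Rp f (n - 1 - j) f * circ f j f f) := by
      rw [h]; abel
    calc epow f (n+1) = ((-1 : ℤ)^n) • (((-1 : ℤ)^n) • epow f (n+1)) := (hsq _).symm
      _ = _ := by rw [h', smul_sub]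
  rw [key]
  have e1 : pprod f (n+1) = circ f n f f := rfl
  rw [e1, ← Finset.Ico_add_one_right_eq_Icc, Finset.sum_Ico_eq_sum_range]
  have e2 : n + 1 - 1 = n := by omega
  rw [e2, Finset.smul_sum]
  have e3 : ∀ i ∈ Finset.range n,
      ((-1 : ℤ)^((1 + i) + 1)) • (epow f (n - (1 + i)) * pprod f (1 + i))
        = -(((-1 : ℤ)^n) • ((-1 : ℤ)^(n - 1 - i) • (Rp f (n - 1 - i) f * circ f i f f))) := by
    intro i hi
    have hi' : i < n := Finset.mem_range.mp hi
    have h1 : epow f (n - (1 + i)) * pprod f (1 + i) = Rp f (n - 1 - i) f * circ f i f f := by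
      have hx : n - (1 + i) = n - 1 - i := by omega
      have hy : (1 + i) - 1 = i := by omega
      rw [show pprod f (1 + i) = circ f ((1 + i) - 1) f f from rfl, hx, hy]
      rfl
    rw [h1, smul_smul, ← neg_smul]
    congr 1
    rw [← pow_add, show n + (n - 1 - i) = (1 + i) + 2 * (n - 1 - i) from by omega]
    have h3 : (-1 : ℤ)^((1 + i) + 2 * (n - 1 - i)) = (-1 : ℤ)^(1 + i) := by
      rw [pow_add, pow_mul]
      norm_num
    rw [h3, pow_succ]
    ring
  rw [Finset.sum_congr rfl e3, Finset.sum_neg_distrib]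
  abel

lemma nsmul_mul_left (f : A) (n : ℕ) (x : A) : f * (n • x) = n • (f * x) :=
  mul_smul_comm n f x

lemma nsmul_mul_right (f : A) (n : ℕ) (x : A) : (n • x) * f = n • (x * f) :=
  smul_mul_assoc n x f

lemma zsmul_mul_right (f : A) (z : ℤ) (x : A) : (z • x) * f = z • (x * f) :=
  smul_mul_assoc z x f

end Aux

/-- In a δ-compatible WNA algebra, for all `n ≥ 1`:
`n·hₙ = Σ_{k=1}^n δₖ(h_{n−k})` and `n·eₙ = Σ_{k=1}^n (−1)^{k+1} δₖ(e_{n−k})`. -/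
theorem n_smul_h_and_e {A : Type*} [NonUnitalNonAssocRing A]
    (hW : ∀ a b c d : A, a * (b * c) * d = a * (b * c * d)) (f : A)
    (δ : ℕ → A →+ A)
    (hder : ∀ k, 1 ≤ k → ∀ x y : A, δ k (x * y) = δ k x * y + x * δ k y)
    (hval : ∀ k, 1 ≤ k → δ k f = pprod f k) :
    ∀ n : ℕ, 1 ≤ n →
      (n • hpow f n = ∑ k ∈ Finset.Icc 1 n, δ k (hpow f (n - k))) ∧
      (n • epow f n = ∑ k ∈ Finset.Icc 1 n, ((-1 : ℤ)^(k+1)) • δ k (epow f (n - k))) := by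
  intro n hn
  induction n, hn using Nat.le_induction with
  | base =>
    constructor
    · rw [Finset.Icc_self, Finset.sum_singleton, one_smul]
      show hpow f 1 = δ 1 (hpow f 0)
      rw [show hpow f 0 = f from rfl, hval 1 le_rfl]
      rfl
    · rw [Finset.Icc_self, Finset.sum_singleton, one_smul]
      show epow f 1 = ((-1 : ℤ)^(1+1)) • δ 1 (epow f 0)
      rw [show epow f 0 = f from rfl, hval 1 le_rfl,
        show ((-1 : ℤ)^(1+1)) = 1 by norm_num, one_smul]
      rfl
  | succ n hn ih =>
    obtain ⟨IH1, IH2⟩ := ih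
    constructor
    · -- h part
      rw [Finset.sum_Icc_succ_top (by omega : 1 ≤ n + 1)]
      have hterm : ∀ k ∈ Finset.Icc 1 n,
          δ k (hpow f (n + 1 - k))
            = pprod f k * hpow f (n - k) + f * δ k (hpow f (n - k)) := by
        intro k hk
        simp only [Finset.mem_Icc] at hk
        have h1 : n + 1 - k = (n - k) + 1 := by omega
        rw [h1, hpow_succ, hder k hk.1, hval k hk.1]
      rw [Finset.sum_congr rfl hterm, Finset.sum_add_distrib, ← Finset.mul_sum, ← IH1,
        show n + 1 - (n + 1) = 0 from by omega,
        show hpow f 0 = f from rfl, hval (n+1) (by omega),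
        nsmul_mul_left, ← hpow_succ, succ_nsmul, h_id hW f n]
      abel
    · -- e part
      rw [Finset.sum_Icc_succ_top (by omega : 1 ≤ n + 1)]
      have hterm : ∀ k ∈ Finset.Icc 1 n,
          ((-1 : ℤ)^(k+1)) • δ k (epow f (n + 1 - k))
            = (((-1 : ℤ)^(k+1)) • δ k (epow f (n - k))) * f
              + ((-1 : ℤ)^(k+1)) • (epow f (n - k) * pprod f k) := by
        intro k hk
        simp only [Finset.mem_Icc] at hk
        have h1 : n + 1 - k = (n - k) + 1 := by omega
        rw [h1, epow_succ, hder k hk.1, hval k hk.1, smul_add, zsmul_mul_right]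
      rw [Finset.sum_congr rfl hterm, Finset.sum_add_distrib, ← Finset.sum_mul, ← IH2,
        show n + 1 - (n + 1) = 0 from by omega,
        show epow f 0 = f from rfl, hval (n+1) (by omega),
        nsmul_mul_right, ← epow_succ, succ_nsmul,
        show ((-1 : ℤ)^(n+1+1)) • pprod f (n+1) = ((-1 : ℤ)^n) • pprod f (n+1) by
          congr 1
          rw [show n + 1 + 1 = n + 2 from rfl, pow_add]
          norm_num,
        e_id f n]
      abel
end

section
/- Let A(f) be a δ-compatible WNA algebra with Hₙ := χₙ(δ̃) where δ̃ = (δ₁, δ₂/2, δ₃/3, …). Then the recursion H_{n+1}(f) = f·Hₙ(f) holds for all n ≥ 0, and consequently for all m,n ≥ 1: Hₘ H_{n+1}(f) − Hₙ H_{m+1}(f) = Σ_{k=1}^m Hₖ(f)·H_{m−k}Hₙ(f) − Σ_{k=1}^n Hₖ(f)·H_{n−k}Hₘ(f). This is the algebraic form of the KP hierarchy. -/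
/- ### Auxiliary sum lemmas -/

lemma sum_Icc_shift {M : Type*} [AddCommMonoid M] (k m : ℕ) (g : ℕ → M) :
    ∑ j ∈ Finset.Icc k m, g j = ∑ i ∈ Finset.range (m + 1 - k), g (k + i) := by
  induction m with
  | zero =>
    cases k with
    | zero => simp
    | succ k => simp
  | succ m ih =>
    rcases le_or_gt k (m+1) with h | h
    · rw [Finset.sum_Icc_succ_top h, ih]
      have h2 : m + 1 + 1 - k = (m + 1 - k) + 1 := by omega
      rw [h2, Finset.sum_range_succ]
      congr 2
      omega
    · have h1 : Finset.Icc k (m+1) = ∅ := by rw [Finset.Icc_eq_empty]; omega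
      have h2 : m + 1 + 1 - k = 0 := by omega
      rw [h1, h2]; simp

lemma sum_Icc_one {M : Type*} [AddCommMonoid M] (m : ℕ) (g : ℕ → M) :
    ∑ k ∈ Finset.Icc 1 m, g k = ∑ i ∈ Finset.range m, g (i + 1) := by
  induction m with
  | zero => simp
  | succ n ih => rw [Finset.sum_Icc_succ_top (by omega), ih, Finset.sum_range_succ]

lemma inner_ext {M : Type*} [AddCommMonoid M] (m k : ℕ) (F : ℕ → ℕ → M) :
    ∑ i ∈ Finset.range (m + 1 - k), F k i
      = ∑ i ∈ Finset.range (m + 1), if k + i ≤ m then F k i else 0 := by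
  have h : Finset.range (m + 1 - k)
      = (Finset.range (m + 1)).filter (fun i => k + i ≤ m) := by
    ext i; simp only [Finset.mem_range, Finset.mem_filter]; omega
  rw [h, Finset.sum_filter]

lemma reindexB {M : Type*} [AddCommMonoid M] (m : ℕ) (F : ℕ → ℕ → M) :
    ∑ k ∈ Finset.Icc 1 m, ∑ i ∈ Finset.range (m + 1 - k), F k i
      = ∑ i ∈ Finset.range (m + 1), ∑ k ∈ Finset.Icc 1 (m - i), F k i := by
  have h1 : ∀ k ∈ Finset.Icc 1 m, ∑ i ∈ Finset.range (m + 1 - k), F k i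
      = ∑ i ∈ Finset.range (m + 1), if k + i ≤ m then F k i else 0 :=
    fun k _ => inner_ext m k F
  rw [Finset.sum_congr rfl h1, Finset.sum_comm]
  refine Finset.sum_congr rfl fun i _ => ?_
  have h2 : Finset.Icc 1 (m - i) = (Finset.Icc 1 m).filter (fun k => k + i ≤ m) := by
    ext k; simp only [Finset.mem_Icc, Finset.mem_filter]; omega
  rw [h2, Finset.sum_filter]

lemma reindexA {M : Type*} [AddCommMonoid M] (m : ℕ) (F : ℕ → ℕ → M) :
    ∑ k ∈ Finset.Icc 1 m, ∑ i ∈ Finset.range (m + 1 - k), F k i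
      = ∑ j ∈ Finset.range (m + 1), ∑ k ∈ Finset.Icc 1 j, F k (j - k) := by
  have h1 : ∀ j ∈ Finset.range (m + 1), ∑ k ∈ Finset.Icc 1 j, F k (j - k)
      = ∑ k ∈ Finset.Icc 1 m, if k ≤ j then F k (j - k) else 0 := by
    intro j hj
    simp only [Finset.mem_range] at hj
    have h2 : Finset.Icc 1 j = (Finset.Icc 1 m).filter (fun k => k ≤ j) := by
      ext k; simp only [Finset.mem_Icc, Finset.mem_filter]; omega
    rw [h2, Finset.sum_filter]
  rw [Finset.sum_congr rfl h1, Finset.sum_comm]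
  refine Finset.sum_congr rfl fun k hk => ?_
  have h3 : (Finset.range (m + 1)).filter (fun j => k ≤ j) = Finset.Icc k m := by
    ext j; simp only [Finset.mem_range, Finset.mem_filter, Finset.mem_Icc]; omega
  rw [← Finset.sum_filter, h3, sum_Icc_shift]
  refine Finset.sum_congr rfl fun i _ => ?_
  congr 1
  omega

/- ### WNA algebra lemmas -/

section KPaux
variable {A : Type*} [NonUnitalNonAssocRing A]

/-- iterated left multiplication by `f`: `iterL f n = L_f^n f`. -/
def iterL (f : A) : ℕ → A
  | 0 => f
  | n+1 => f * iterL f n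

lemma nsmulMul (n : ℕ) (a b : A) : (n • a) * b = n • (a * b) := by
  induction n with
  | zero => simp
  | succ k ih => rw [succ_nsmul, succ_nsmul, add_mul, ih]

lemma mulNsmul (n : ℕ) (a b : A) : a * (n • b) = n • (a * b) := by
  induction n with
  | zero => simp
  | succ k ih => rw [succ_nsmul, succ_nsmul, mul_add, ih]

variable (f : A) (hW : ∀ a b c d : A, a * (b * c) * d = a * (b * c * d))

include hW in
lemma circ_nucleus : ∀ (n : ℕ) (a b x y : A),
    (x * circ f n a b) * y = x * (circ f n a b * y) := by
  intro n
  induction n with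
  | zero => intro a b x y; exact hW x a b y
  | succ k ih =>
    intro a b x y
    have e : circ f (k+1) a b = a * circ f k f b - circ f k (a * f) b := rfl
    rw [e, mul_sub, sub_mul, sub_mul, mul_sub, hW x a (circ f k f b) y, ih (a*f) b x y]

include hW in
lemma circC : ∀ (m : ℕ) (a : A),
    circ f m a f = a * iterL f m
      - ∑ k ∈ Finset.Icc 1 m, circ f (k - 1) a f * iterL f (m - k) := by
  intro m
  induction m with
  | zero => intro a; simp [circ, iterL]
  | succ m ih =>
    intro a
    have hstep : circ f (m+1) a f = a * circ f m f f - circ f m (a * f) f := rfl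
    rw [hstep, ih f, ih (a * f)]
    rw [sum_Icc_one, sum_Icc_one, sum_Icc_one (m+1)]
    have hR : ∀ i ∈ Finset.range (m+1),
        circ f (i + 1 - 1) a f * iterL f (m + 1 - (i + 1))
          = circ f i a f * iterL f (m - i) := by
      intro i hi
      have h1 : i + 1 - 1 = i := by omega
      have h2 : m + 1 - (i + 1) = m - i := by omega
      rw [h1, h2]
    rw [Finset.sum_congr rfl hR, Finset.sum_range_succ']
    have hG : ∀ i ∈ Finset.range m,
        circ f (i + 1) a f * iterL f (m - (i + 1))
          = a * (circ f i f f * iterL f (m - 1 - i)) - circ f i (a * f) f * iterL f (m - 1 - i) := by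
      intro i hi
      have e : circ f (i+1) a f = a * circ f i f f - circ f i (a * f) f := rfl
      have h2 : m - (i + 1) = m - 1 - i := by omega
      rw [e, h2, sub_mul, circ_nucleus f hW]
    rw [Finset.sum_congr rfl hG]
    have hC : ∀ i ∈ Finset.range m,
        circ f (i + 1 - 1) f f * iterL f (m - (i + 1)) = circ f i f f * iterL f (m - 1 - i) := by
      intro i hi
      have h1 : i + 1 - 1 = i := by omega
      have h2 : m - (i + 1) = m - 1 - i := by omega
      rw [h1, h2]
    have hD : ∀ i ∈ Finset.range m,
        circ f (i + 1 - 1) (a * f) f * iterL f (m - (i + 1))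
          = circ f i (a * f) f * iterL f (m - 1 - i) := by
      intro i hi
      have h1 : i + 1 - 1 = i := by omega
      have h2 : m - (i + 1) = m - 1 - i := by omega
      rw [h1, h2]
    rw [Finset.sum_congr rfl hC, Finset.sum_congr rfl hD]
    have hmul : a * (f * iterL f m) = a * iterL f (m + 1) := rfl
    have h0 : circ f 0 a f * iterL f (m - 0) = a * f * iterL f m := by
      have : circ f 0 a f = a * f := rfl
      rw [this, Nat.sub_zero]
    rw [h0, mul_sub, hmul, Finset.mul_sum, Finset.sum_sub_distrib]
    abel

include hW in
lemma pstar (m : ℕ) :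
    pprod f (m + 1) = iterL f (m + 1)
      - ∑ k ∈ Finset.Icc 1 m, pprod f k * iterL f (m - k) := by
  have h1 : pprod f (m+1) = circ f m f f := by simp [pprod]
  rw [h1, circC f hW m f]
  have : ∀ k ∈ Finset.Icc 1 m, circ f (k-1) f f * iterL f (m-k) = pprod f k * iterL f (m-k) := by
    intro k hk; rfl
  rw [Finset.sum_congr rfl this]
  rfl

variable (δ : ℕ → A →+ A)
variable (hder : ∀ k, 1 ≤ k → ∀ x y : A, δ k (x * y) = δ k x * y + x * δ k y)
variable (hval : ∀ k, 1 ≤ k → δ k f = pprod f k)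

include hW hder hval in
lemma Ssum : ∀ n : ℕ,
    ∑ k ∈ Finset.Icc 1 (n+1), δ k (iterL f (n + 1 - k)) = (n+1) • iterL f (n+1) := by
  intro n
  induction n with
  | zero =>
    rw [Finset.Icc_self, Finset.sum_singleton]
    have h1 : iterL f (0 + 1 - 1) = f := rfl
    rw [h1, hval 1 le_rfl, one_nsmul]
    rfl
  | succ n ih =>
    rw [Finset.sum_Icc_succ_top (by omega : 1 ≤ n + 1 + 1)]
    have htop : iterL f (n + 1 + 1 - (n + 1 + 1)) = f := by
      have : n + 1 + 1 - (n + 1 + 1) = 0 := by omega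
      rw [this]; rfl
    rw [htop, hval (n+1+1) (by omega), pstar f hW (n+1)]
    have hmain : ∀ k ∈ Finset.Icc 1 (n+1),
        δ k (iterL f (n + 1 + 1 - k))
          = pprod f k * iterL f (n + 1 - k) + f * δ k (iterL f (n + 1 - k)) := by
      intro k hk
      simp only [Finset.mem_Icc] at hk
      have h2 : n + 1 + 1 - k = (n + 1 - k) + 1 := by omega
      have h3 : iterL f ((n + 1 - k) + 1) = f * iterL f (n + 1 - k) := rfl
      rw [h2, h3, hder k hk.1, hval k hk.1]
    rw [Finset.sum_congr rfl hmain, Finset.sum_add_distrib, ← Finset.mul_sum, ih,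
      mulNsmul]
    have h4 : f * iterL f (n+1) = iterL f (n+1+1) := rfl
    rw [h4]
    have hfin : (n + 1 + 1) • iterL f (n+1+1)
        = (n+1) • iterL f (n+1+1) + iterL f (n+1+1) := succ_nsmul _ _
    rw [hfin]
    have key : ∀ s t l : A, (s + t) + (l - s) = t + l := fun s t l => by abel
    exact key _ _ _

end KPaux

/- ### H-operator lemmas -/

section Hops
variable {A : Type*} [NonUnitalNonAssocRing A] [Module ℚ A]

lemma cancelN (N : ℕ) (hN : N ≠ 0) {a b : A} (h : N • a = N • b) : a = b := by
  have h2 : (N : ℚ) • a = (N : ℚ) • b := by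
    rw [Nat.cast_smul_eq_nsmul, Nat.cast_smul_eq_nsmul]; exact h
  have hq : (N : ℚ) ≠ 0 := by exact_mod_cast hN
  calc a = (N:ℚ)⁻¹ • ((N:ℚ) • a) := (inv_smul_smul₀ hq a).symm
    _ = (N:ℚ)⁻¹ • ((N:ℚ) • b) := by rw [h2]
    _ = b := inv_smul_smul₀ hq b

variable (δ : ℕ → A →+ A) (H : ℕ → A →+ A)
variable (hcomm : ∀ m n, ∀ x : A, δ m (δ n x) = δ n (δ m x))
variable (hH0 : ∀ x : A, H 0 x = x)
variable (hHrec : ∀ (n : ℕ) (x : A),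
      (n + 1) • H (n+1) x = ∑ k ∈ Finset.Icc 1 (n+1), δ k (H (n + 1 - k) x))

include hH0 hHrec hcomm in
lemma deltaH : ∀ (n : ℕ) (j : ℕ) (x : A), δ j (H n x) = H n (δ j x) := by
  intro n
  induction n using Nat.strong_induction_on with
  | _ n ih =>
    match n with
    | 0 => intro j x; rw [hH0, hH0]
    | (m+1) =>
      intro j x
      apply cancelN (m+1) (by omega)
      calc (m+1) • δ j (H (m+1) x)
          = δ j ((m+1) • H (m+1) x) := (map_nsmul (δ j) _ _).symm
        _ = δ j (∑ k ∈ Finset.Icc 1 (m+1), δ k (H (m + 1 - k) x)) := by rw [hHrec m x]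
        _ = ∑ k ∈ Finset.Icc 1 (m+1), δ j (δ k (H (m + 1 - k) x)) := map_sum _ _ _
        _ = ∑ k ∈ Finset.Icc 1 (m+1), δ k (H (m + 1 - k) (δ j x)) := by
            refine Finset.sum_congr rfl fun k hk => ?_
            simp only [Finset.mem_Icc] at hk
            rw [hcomm j k, ih (m + 1 - k) (by omega) j x]
        _ = (m+1) • H (m+1) (δ j x) := (hHrec m (δ j x)).symm

include hH0 hHrec hcomm in
lemma Hcomm : ∀ (m n : ℕ) (x : A), H m (H n x) = H n (H m x) := by
  intro m
  induction m using Nat.strong_induction_on with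
  | _ m ih =>
    match m with
    | 0 => intro n x; rw [hH0, hH0]
    | (m+1) =>
      intro n x
      apply cancelN (m+1) (by omega)
      calc (m+1) • H (m+1) (H n x)
          = ∑ k ∈ Finset.Icc 1 (m+1), δ k (H (m + 1 - k) (H n x)) := hHrec m (H n x)
        _ = ∑ k ∈ Finset.Icc 1 (m+1), H n (δ k (H (m + 1 - k) x)) := by
            refine Finset.sum_congr rfl fun k hk => ?_
            simp only [Finset.mem_Icc] at hk
            rw [ih (m + 1 - k) (by omega) n x, deltaH δ H hcomm hH0 hHrec]
        _ = H n (∑ k ∈ Finset.Icc 1 (m+1), δ k (H (m + 1 - k) x)) := (map_sum _ _ _).symm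
        _ = H n ((m+1) • H (m+1) x) := by rw [hHrec m x]
        _ = (m+1) • H n (H (m+1) x) := map_nsmul _ _ _

omit [Module ℚ A] in
include hHrec in
lemma Hrec0 : ∀ (j : ℕ) (x : A),
    j • H j x = ∑ k ∈ Finset.Icc 1 j, δ k (H (j - k) x) := by
  intro j x
  match j with
  | 0 => simp
  | (m+1) => exact hHrec m x

variable (hder : ∀ k, 1 ≤ k → ∀ x y : A, δ k (x * y) = δ k x * y + x * δ k y)

include hH0 hHrec hcomm hder in
lemma Leibniz : ∀ (n : ℕ) (x y : A),
    H n (x * y) = ∑ j ∈ Finset.range (n + 1), H j x * H (n - j) y := by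
  intro n
  induction n using Nat.strong_induction_on with
  | _ n ih =>
    match n with
    | 0 =>
      intro x y
      rw [Finset.sum_range_one, hH0, hH0, hH0]
    | (m+1) =>
      intro x y
      apply cancelN (m+1) (by omega)
      have step1 : ∀ k ∈ Finset.Icc 1 (m+1),
          δ k (H (m + 1 - k) (x * y))
            = ∑ i ∈ Finset.range (m + 1 + 1 - k),
                (H i (δ k x) * H (m + 1 - k - i) y + H i x * H (m + 1 - k - i) (δ k y)) := by
        intro k hk
        simp only [Finset.mem_Icc] at hk
        rw [ih (m + 1 - k) (by omega) x y]
        have hr : m + 1 - k + 1 = m + 1 + 1 - k := by omega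
        rw [hr, map_sum]
        refine Finset.sum_congr rfl fun i _ => ?_
        rw [hder k hk.1, deltaH δ H hcomm hH0 hHrec, deltaH δ H hcomm hH0 hHrec]
      have split : ∀ k ∈ Finset.Icc 1 (m+1),
          ∑ i ∈ Finset.range (m + 1 + 1 - k),
              (H i (δ k x) * H (m + 1 - k - i) y + H i x * H (m + 1 - k - i) (δ k y))
            = (∑ i ∈ Finset.range (m + 1 + 1 - k), H i (δ k x) * H (m + 1 - k - i) y)
              + ∑ i ∈ Finset.range (m + 1 + 1 - k), H i x * H (m + 1 - k - i) (δ k y) :=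
        fun k _ => Finset.sum_add_distrib
      have partA :
          ∑ k ∈ Finset.Icc 1 (m+1), ∑ i ∈ Finset.range (m + 1 + 1 - k),
              H i (δ k x) * H (m + 1 - k - i) y
            = ∑ j ∈ Finset.range (m + 1 + 1), j • (H j x * H (m + 1 - j) y) := by
        rw [reindexA (m+1) (fun k i => H i (δ k x) * H (m + 1 - k - i) y)]
        refine Finset.sum_congr rfl fun j hj => ?_
        simp only [Finset.mem_range] at hj
        have h1 : ∀ k ∈ Finset.Icc 1 j,
            H (j - k) (δ k x) * H (m + 1 - k - (j - k)) y
              = δ k (H (j - k) x) * H (m + 1 - j) y := by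
          intro k hk
          simp only [Finset.mem_Icc] at hk
          have h2 : m + 1 - k - (j - k) = m + 1 - j := by omega
          rw [h2, deltaH δ H hcomm hH0 hHrec]
        rw [Finset.sum_congr rfl h1, ← Finset.sum_mul, ← Hrec0 δ H hHrec, nsmulMul]
      have partB :
          ∑ k ∈ Finset.Icc 1 (m+1), ∑ i ∈ Finset.range (m + 1 + 1 - k),
              H i x * H (m + 1 - k - i) (δ k y)
            = ∑ j ∈ Finset.range (m + 1 + 1), (m + 1 - j) • (H j x * H (m + 1 - j) y) := by
        rw [reindexB (m+1) (fun k i => H i x * H (m + 1 - k - i) (δ k y))]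
        refine Finset.sum_congr rfl fun i hi => ?_
        simp only [Finset.mem_range] at hi
        have h1 : ∀ k ∈ Finset.Icc 1 (m + 1 - i),
            H i x * H (m + 1 - k - i) (δ k y)
              = H i x * δ k (H (m + 1 - i - k) y) := by
          intro k hk
          simp only [Finset.mem_Icc] at hk
          have h2 : m + 1 - k - i = m + 1 - i - k := by omega
          rw [h2, deltaH δ H hcomm hH0 hHrec]
        rw [Finset.sum_congr rfl h1, ← Finset.mul_sum, ← Hrec0 δ H hHrec, mulNsmul]
      calc (m+1) • H (m+1) (x * y)
          = ∑ k ∈ Finset.Icc 1 (m+1), δ k (H (m + 1 - k) (x * y)) := hHrec m (x * y)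
        _ = ∑ k ∈ Finset.Icc 1 (m+1),
              ((∑ i ∈ Finset.range (m + 1 + 1 - k), H i (δ k x) * H (m + 1 - k - i) y)
                + ∑ i ∈ Finset.range (m + 1 + 1 - k), H i x * H (m + 1 - k - i) (δ k y)) := by
            refine Finset.sum_congr rfl fun k hk => ?_
            rw [step1 k hk, split k hk]
        _ = (∑ k ∈ Finset.Icc 1 (m+1), ∑ i ∈ Finset.range (m + 1 + 1 - k),
                H i (δ k x) * H (m + 1 - k - i) y)
              + ∑ k ∈ Finset.Icc 1 (m+1), ∑ i ∈ Finset.range (m + 1 + 1 - k),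
                H i x * H (m + 1 - k - i) (δ k y) := Finset.sum_add_distrib
        _ = ∑ j ∈ Finset.range (m + 1 + 1),
              (j • (H j x * H (m + 1 - j) y) + (m + 1 - j) • (H j x * H (m + 1 - j) y)) := by
            rw [partA, partB, Finset.sum_add_distrib]
        _ = ∑ j ∈ Finset.range (m + 1 + 1), (m+1) • (H j x * H (m + 1 - j) y) := by
            refine Finset.sum_congr rfl fun j hj => ?_
            simp only [Finset.mem_range] at hj
            rw [← add_nsmul]
            congr 1
            omega
        _ = (m+1) • ∑ j ∈ Finset.range (m + 1 + 1), H j x * H (m + 1 - j) y :=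
            (Finset.smul_sum).symm

end Hops

/-- With `Hₙ = χₙ(δ̃)` (characterized over ℚ by `H₀ = id` and the recursion
`n·Hₙ = Σ_{k=1}^n δₖ∘H_{n−k}`), the recursion `H_{n+1}(f) = f·Hₙ(f)` holds, and for
all `m,n ≥ 1` the algebraic KP hierarchy identity
`Hₘ H_{n+1}(f) − Hₙ H_{m+1}(f) = Σ_{k=1}^m Hₖ(f)·H_{m−k}Hₙ(f) − Σ_{k=1}^n Hₖ(f)·H_{n−k}Hₘ(f)`. -/
theorem KP_identities {A : Type*} [NonUnitalNonAssocRing A] [Module ℚ A]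
    (hW : ∀ a b c d : A, a * (b * c) * d = a * (b * c * d)) (f : A)
    (δ : ℕ → A →+ A)
    (hder : ∀ k, 1 ≤ k → ∀ x y : A, δ k (x * y) = δ k x * y + x * δ k y)
    (hval : ∀ k, 1 ≤ k → δ k f = pprod f k)
    (hcomm : ∀ m n, ∀ x : A, δ m (δ n x) = δ n (δ m x))
    (H : ℕ → A →+ A)
    (hH0 : ∀ x : A, H 0 x = x)
    (hHrec : ∀ (n : ℕ) (x : A),
      (n + 1) • H (n+1) x = ∑ k ∈ Finset.Icc 1 (n+1), δ k (H (n + 1 - k) x)) :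
    (∀ n : ℕ, H (n+1) f = f * H n f) ∧
    (∀ m n : ℕ, 1 ≤ m → 1 ≤ n →
      H m (H (n+1) f) - H n (H (m+1) f)
        = ∑ k ∈ Finset.Icc 1 m, H k f * H (m - k) (H n f)
          - ∑ k ∈ Finset.Icc 1 n, H k f * H (n - k) (H m f)) := by
  -- `H n f = L_f^n f`
  have hiter : ∀ n : ℕ, H n f = iterL f n := by
    intro n
    induction n using Nat.strong_induction_on with
    | _ n ih =>
      match n with
      | 0 => exact hH0 f
      | (m+1) =>
        apply cancelN (m+1) (by omega)
        calc (m+1) • H (m+1) f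
            = ∑ k ∈ Finset.Icc 1 (m+1), δ k (H (m + 1 - k) f) := hHrec m f
          _ = ∑ k ∈ Finset.Icc 1 (m+1), δ k (iterL f (m + 1 - k)) := by
              refine Finset.sum_congr rfl fun k hk => ?_
              simp only [Finset.mem_Icc] at hk
              rw [ih (m + 1 - k) (by omega)]
          _ = (m+1) • iterL f (m+1) := Ssum f hW δ hder hval m
  have part1 : ∀ n : ℕ, H (n+1) f = f * H n f := by
    intro n
    rw [hiter (n+1), hiter n]
    rfl
  refine ⟨part1, ?_⟩
  intro m n hm hn
  -- expand via the Leibniz rule, peeling off the `j = 0` term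
  have expand : ∀ a b : ℕ,
      H a (H (b+1) f)
        = (∑ k ∈ Finset.Icc 1 a, H k f * H (a - k) (H b f)) + f * H a (H b f) := by
    intro a b
    rw [part1 b, Leibniz δ H hcomm hH0 hHrec hder a f (H b f), Finset.sum_range_succ']
    rw [sum_Icc_one a (fun k => H k f * H (a - k) (H b f))]
    congr 1
    rw [hH0, Nat.sub_zero]
  rw [expand m n, expand n m]
  rw [Hcomm δ H hcomm hH0 hHrec n m f]
  abel
end

section
/- Let A be an associative algebra with commuting linear maps L, R satisfying L(ab) = L(a)b, R(ab) = aR(b). Define a ∘₁ b := (aR)∘b − a∘(Lb) where ∘ is the original product and aR := R(a), Lb := L(b). Augment A with an element ν, setting ν ∘₁ ν := 0, ν ∘₁ a := La, a ∘₁ ν := −aR. Then the resulting algebra (A ⊕ span(ν), ∘₁) is weakly nonassociative with nucleus exactly containing A, and the derived products satisfy ν ∘ₙ ν = 0, ν ∘ₙ a = Lⁿa, a ∘ₙ ν = −aRⁿ, and a ∘ₙ b = (aRⁿ)∘b − a∘(Lⁿb) for all n ≥ 1 and a,b ∈ A. -/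
/-- The WNA product on `k × A` (the augmentation of the associative algebra `A` by `ν`):
`ν ∘₁ ν = 0`, `ν ∘₁ a = La`, `a ∘₁ ν = −aR`, `a ∘₁ b = (aR)∘b − a∘(Lb)`,
where `ν = (1,0)` and `A` is embedded as `a ↦ (0,a)`. -/
def wnaMul {k A : Type*} [CommRing k] [NonUnitalRing A] [Module k A]
    (L R : A →ₗ[k] A) : k × A → k × A → k × A :=
  fun x y => (0, x.1 • L y.2 - y.1 • R x.2 + R x.2 * y.2 - x.2 * L y.2)

/-- Derived products built from `ν = (1,0)`:
`wnaCirc L R (n-1) x y` is `x ∘ₙ y`. -/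
def wnaCirc {k A : Type*} [CommRing k] [NonUnitalRing A] [Module k A]
    (L R : A →ₗ[k] A) : ℕ → k × A → k × A → k × A
  | 0, x, y => wnaMul L R x y
  | n+1, x, y =>
      wnaMul L R x (wnaCirc L R n ((1 : k), (0 : A)) y)
        - wnaCirc L R n (wnaMul L R x ((1 : k), (0 : A))) y

/-!
Every product `x ∘₁ y` lies in `A`, so weak nonassociativity is a special case of `A` lying in
the nucleus, which is a direct computation from `L(ab) = L(a)b`, `R(ab) = aR(b)` and `LR = RL`.
The derived products follow by induction on `n` from
`x ∘ₙ₊₁ y = x ∘₁ (ν ∘ₙ y) − (x ∘₁ ν) ∘ₙ y`: since `x ∘₁ ν` is `0` or `−xR`, the induction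
hypothesis, taken for all left arguments, handles the second term.
-/

namespace WNA

variable {k A : Type*} [CommRing k] [NonUnitalRing A] [Module k A] (L R : A →ₗ[k] A)

local notation "ν" => ((1 : k), (0 : A))

theorem wnaMul_eq_inr (x y : k × A) : wnaMul L R x y = (0, (wnaMul L R x y).2) := rfl

@[simp]
theorem wnaMul_zero_left (y : k × A) : wnaMul L R 0 y = 0 := by
  simp [wnaMul]

@[simp]
theorem wnaMul_zero_right (x : k × A) : wnaMul L R x 0 = 0 := by
  simp [wnaMul]

@[simp]
theorem wnaMul_nu_nu : wnaMul L R ν ν = 0 := by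
  simp [wnaMul]

@[simp]
theorem wnaMul_nu_inr (a : A) : wnaMul L R ν (0, a) = (0, L a) := by
  simp [wnaMul]

@[simp]
theorem wnaMul_inr_nu (a : A) : wnaMul L R (0, a) ν = (0, -R a) := by
  simp [wnaMul]

@[simp]
theorem wnaMul_inr_inr (a b : A) : wnaMul L R (0, a) (0, b) = (0, R a * b - a * L b) := by
  simp [wnaMul]

theorem wnaCirc_succ (n : ℕ) (x y : k × A) :
    wnaCirc L R (n + 1) x y =
      wnaMul L R x (wnaCirc L R n ν y) - wnaCirc L R n (wnaMul L R x ν) y :=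
  rfl

@[simp]
theorem wnaCirc_zero_left (n : ℕ) (y : k × A) : wnaCirc L R n 0 y = 0 := by
  induction n with
  | zero => exact wnaMul_zero_left L R y
  | succ n ih => simp [wnaCirc_succ, ih]

theorem wnaCirc_nu_nu (n : ℕ) : wnaCirc L R n ν ν = 0 := by
  induction n with
  | zero => exact wnaMul_nu_nu L R
  | succ n ih => simp [wnaCirc_succ, ih]

theorem wnaCirc_nu_inr (n : ℕ) (a : A) : wnaCirc L R n ν (0, a) = (0, (⇑L)^[n + 1] a) := by
  induction n with
  | zero => exact wnaMul_nu_inr L R a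
  | succ n ih => simp [wnaCirc_succ, ih, Function.iterate_succ_apply' _ (n + 1)]

theorem wnaCirc_inr_nu (n : ℕ) (a : A) : wnaCirc L R n (0, a) ν = (0, -(⇑R)^[n + 1] a) := by
  induction n generalizing a with
  | zero => exact wnaMul_inr_nu L R a
  | succ n ih =>
    rw [wnaCirc_succ, wnaCirc_nu_nu, wnaMul_inr_nu, ih, iterate_map_neg,
      Function.iterate_succ_apply (⇑R) (n + 1) a, wnaMul_zero_right, zero_sub, Prod.neg_mk,
      neg_zero, neg_neg]

theorem wnaCirc_inr_inr (n : ℕ) (a b : A) :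
    wnaCirc L R n (0, a) (0, b) = (0, (⇑R)^[n + 1] a * b - a * (⇑L)^[n + 1] b) := by
  induction n generalizing a with
  | zero => exact wnaMul_inr_inr L R a b
  | succ n ih =>
    rw [wnaCirc_succ, wnaCirc_nu_inr, wnaMul_inr_nu, wnaMul_inr_inr, ih, iterate_map_neg,
      Function.iterate_succ_apply' (⇑L) (n + 1) b, Function.iterate_succ_apply (⇑R) (n + 1) a,
      Prod.mk_sub_mk, sub_zero]
    congr 1
    noncomm_ring

variable [SMulCommClass k A A] [IsScalarTower k A A]

theorem wnaMul_assoc_inr (hLR : ∀ a : A, L (R a) = R (L a))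
    (hL : ∀ a b : A, L (a * b) = L a * b) (hR : ∀ a b : A, R (a * b) = a * R b)
    (a : A) (x z : k × A) :
    wnaMul L R (wnaMul L R x (0, a)) z = wnaMul L R x (wnaMul L R (0, a) z) := by
  simp only [wnaMul, Prod.mk.injEq, true_and, map_add, map_sub, map_smul, hL, hR, hLR,
    zero_smul, sub_zero, zero_sub, mul_add, add_mul, mul_sub, sub_mul,
    mul_neg, smul_mul_assoc, mul_smul_comm, mul_assoc, map_neg, smul_neg, smul_add, smul_sub]
  module

end WNA

open WNA in
/-- Let `A` be associative with commuting maps `L, R` satisfying `L(ab) = L(a)b`,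
`R(ab) = aR(b)`. Then `A ⊕ span(ν)` with the product `∘₁` is weakly nonassociative,
its nucleus contains `A`, and the derived products satisfy `ν ∘ₙ ν = 0`,
`ν ∘ₙ a = Lⁿa`, `a ∘ₙ ν = −aRⁿ`, `a ∘ₙ b = (aRⁿ)∘b − a∘(Lⁿb)` for all `n ≥ 1`. -/
theorem wna_augmentation {k A : Type*} [CommRing k] [NonUnitalRing A] [Module k A]
    [SMulCommClass k A A] [IsScalarTower k A A]
    (L R : A →ₗ[k] A) (hLR : ∀ a : A, L (R a) = R (L a))
    (hL : ∀ a b : A, L (a * b) = L a * b)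
    (hR : ∀ a b : A, R (a * b) = a * R b) :
    (∀ x y z w : k × A,
      wnaMul L R (wnaMul L R x (wnaMul L R y z)) w
        = wnaMul L R x (wnaMul L R (wnaMul L R y z) w)) ∧
    (∀ (a : A) (x z : k × A),
      wnaMul L R (wnaMul L R x ((0 : k), a)) z
        = wnaMul L R x (wnaMul L R ((0 : k), a) z)) ∧
    (∀ n : ℕ, wnaCirc L R n ((1 : k), (0 : A)) ((1 : k), (0 : A)) = 0) ∧
    (∀ (n : ℕ) (a : A),
      wnaCirc L R n ((1 : k), (0 : A)) ((0 : k), a) = ((0 : k), (⇑L)^[n+1] a)) ∧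
    (∀ (n : ℕ) (a : A),
      wnaCirc L R n ((0 : k), a) ((1 : k), (0 : A)) = ((0 : k), -((⇑R)^[n+1] a))) ∧
    (∀ (n : ℕ) (a b : A),
      wnaCirc L R n ((0 : k), a) ((0 : k), b)
        = ((0 : k), (⇑R)^[n+1] a * b - a * (⇑L)^[n+1] b)) := by
  have nucleus := wnaMul_assoc_inr L R hLR hL hR
  refine ⟨fun x y z w => ?_, nucleus, wnaCirc_nu_nu L R, wnaCirc_nu_inr L R,
    wnaCirc_inr_nu L R, wnaCirc_inr_inr L R⟩
  rw [wnaMul_eq_inr L R y z]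
  exact nucleus _ x w
end
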